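/- If a poset P has order dimension at most k, then its comparability graph is representable by a concatenation of k permutations of its elements; consequently, for any split order P (a poset whose comparability graph is a split graph), the order dimension of P is at most three. -/

import Mathlib

section Defs

variable {V : Type*}

/-- An orientation of a simple graph: each edge gets exactly one direction. -/
def IsOrientation (G : SimpleGraph V) (D : V → V → Prop) : Prop :=
  (∀ a b, G.Adj a b ↔ (D a b ∨ D b a)) ∧ (∀ a b, D a b → ¬ D b a)

/-- A transitive orientation. -/
def IsTransitiveOrientation (G : SimpleGraph V) (D : V → V → Prop) : Prop :=
  IsOrientation G D ∧ ∀ a b c, D a b → D b c → D a c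

/-- `I, C` is a split partition of `G`: `I` independent, `C` a clique, covering `V`. -/
def IsSplitPartition (G : SimpleGraph V) (I C : Set V) : Prop :=
  I ∪ C = Set.univ ∧ Disjoint I C ∧
    (∀ a ∈ I, ∀ b ∈ I, ¬ G.Adj a b) ∧
    (∀ a ∈ C, ∀ b ∈ C, a ≠ b → G.Adj a b)

/-- The clique `C` is inclusion-wise maximal: no vertex of `I` is adjacent to all of `C`. -/
def IsMaxCliquePartition (G : SimpleGraph V) (I C : Set V) : Prop :=
  ∀ a ∈ I, ∃ v ∈ C, ¬ G.Adj a v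

/-- `N(a) = [1,m] ∪ [n,k]` (1-indexed labels; `c i` is the vertex with label `i+1`). -/
def Form1 (G : SimpleGraph V) {k : ℕ} (c : Fin k → V) (a : V) (m n : ℕ) : Prop :=
  1 ≤ m ∧ m < n ∧ n ≤ k ∧
    ∀ i : Fin k, G.Adj a (c i) ↔ (i.val + 1 ≤ m ∨ n ≤ i.val + 1)

/-- `N(a) = [1,r]` with `r < k`. -/
def Form2 (G : SimpleGraph V) {k : ℕ} (c : Fin k → V) (a : V) (r : ℕ) : Prop :=
  r < k ∧ ∀ i : Fin k, G.Adj a (c i) ↔ i.val + 1 ≤ r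

/-- `N(a) = [l,k]` with `l > 1`. -/
def Form3 (G : SimpleGraph V) {k : ℕ} (c : Fin k → V) (a : V) (l : ℕ) : Prop :=
  1 < l ∧ l ≤ k ∧ ∀ i : Fin k, G.Adj a (c i) ↔ l ≤ i.val + 1

/-- Properties (i)–(v) of the characterization of split comparability graphs. -/
def GoodLabeling (G : SimpleGraph V) (I : Set V) {k : ℕ} (c : Fin k → V) : Prop :=
  (∀ a ∈ I, (∃ m n, Form1 G c a m n) ∨ (∃ r, Form2 G c a r) ∨ (∃ l, Form3 G c a l)) ∧
  (∀ a ∈ I, ∀ b ∈ I, ∀ r l, Form2 G c a r → Form3 G c b l → r < l) ∧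
  (∀ a ∈ I, ∀ b ∈ I, ∀ m n r, Form1 G c a m n → Form2 G c b r → r < n) ∧
  (∀ a ∈ I, ∀ b ∈ I, ∀ m n l, Form1 G c a m n → Form3 G c b l → m < l) ∧
  (∀ a ∈ I, ∀ b ∈ I, ∀ m n m' n', Form1 G c a m n → Form1 G c b m' n' → m < n' ∧ m' < n)

/-- Letters `a` and `b` alternate in the word `w`. -/
def Alternates [DecidableEq V] (w : List V) (a b : V) : Prop :=
  (w.filter fun x => x = a ∨ x = b).Chain' (· ≠ ·)

/-- `p` is a permutation of `V`: every element occurs exactly once. -/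
def IsPermutationOf [DecidableEq V] (p : List V) : Prop :=
  p.Nodup ∧ ∀ v : V, v ∈ p

/-- The word `w` represents the graph `G`. -/
def Represents [DecidableEq V] (w : List V) (G : SimpleGraph V) : Prop :=
  ∀ a b : V, a ≠ b → (G.Adj a b ↔ Alternates w a b)

/-- `G` is permutationally `k`-representable (so `ℛᵖ(G) ≤ k`). -/
def PrnLe [DecidableEq V] (G : SimpleGraph V) (k : ℕ) : Prop :=
  ∃ ps : List (List V), ps.length = k ∧ (∀ p ∈ ps, IsPermutationOf p) ∧
    Represents ps.flatten G

/-- The graph `B₄`: a 4-clique `{0,1,2,3}` together with independent vertices `4, 5, 6`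
with neighborhoods `{0,1}`, `{1,2}`, `{2,3}` respectively. -/
def B4 : SimpleGraph (Fin 7) :=
  SimpleGraph.fromRel fun a b =>
    (a.val ≤ 3 ∧ b.val ≤ 3) ∨ (a = 4 ∧ (b = 0 ∨ b = 1)) ∨
      (a = 5 ∧ (b = 1 ∨ b = 2)) ∨ (a = 6 ∧ (b = 2 ∨ b = 3))

/-- `G` contains `B₄` as an induced subgraph. -/
def HasB4 (G : SimpleGraph V) : Prop :=
  ∃ f : Fin 7 → V, Function.Injective f ∧ ∀ u v, B4.Adj u v ↔ G.Adj (f u) (f v)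

/-- A semi-transitive orientation: acyclic, and every directed path is either
not a "shortcut" situation or has all chords. -/
def IsSemiTransitive (G : SimpleGraph V) (D : V → V → Prop) : Prop :=
  (∀ a, ¬ Relation.TransGen D a a) ∧
    ∀ (l : List V) (h : l ≠ []), l.Chain' D →
      ¬ G.Adj (l.head h) (l.getLast h) ∨
        ∀ i j : Fin l.length, i < j → D (l.get i) (l.get j)

/-- The comparability graph of a partial order. -/
def compGraph (α : Type*) [PartialOrder α] : SimpleGraph α where
  Adj a b := a ≠ b ∧ (a ≤ b ∨ b ≤ a)
  symm := ⟨fun _ _ h => ⟨h.1.symm, h.2.symm⟩⟩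
  loopless := ⟨fun _ h => h.1 rfl⟩

end Defs

section Helpers
variable {α : Type*}

lemma natKey_lt {K a b c e : ℕ} (hb : b < K) (he : e < K) :
    a * K + b < c * K + e ↔ a < c ∨ (a = c ∧ b < e) := by
  constructor
  · intro h
    rcases lt_trichotomy a c with h1 | h1 | h1
    · exact Or.inl h1
    · subst h1; exact Or.inr ⟨rfl, by omega⟩
    · exfalso
      have h2 : (c + 1) * K ≤ a * K := Nat.mul_le_mul_right _ (by omega)
      rw [Nat.succ_mul] at h2
      omega
  · rintro (h | ⟨rfl, h⟩)
    · have h2 : (a + 1) * K ≤ c * K := Nat.mul_le_mul_right _ (by omega)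
      rw [Nat.succ_mul] at h2
      omega
    · omega

lemma natKey_eq {K a b c e : ℕ} (hb : b < K) (he : e < K)
    (h : a * K + b = c * K + e) : a = c ∧ b = e := by
  rcases lt_trichotomy a c with h1 | h1 | h1
  · have := (natKey_lt hb he).2 (Or.inl h1); omega
  · subst h1; exact ⟨rfl, by omega⟩
  · have := (natKey_lt he hb).2 (Or.inl h1); omega

def keyOrd (f : α → ℕ) : α → α → Prop := fun x y => x = y ∨ f x < f y

lemma keyOrd_linear (f : α → ℕ) (hf : Function.Injective f) :
    IsLinearOrder α (keyOrd f) where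
  refl := fun x => Or.inl rfl
  trans := by
    rintro x y z (rfl | h1) (rfl | h2)
    · exact Or.inl rfl
    · exact Or.inr h2
    · exact Or.inr h1
    · exact Or.inr (h1.trans h2)
  antisymm := by
    rintro x y (rfl | h1) (h2 | h2)
    · rfl
    · rfl
    · exact h2.symm
    · omega
  total := by
    intro x y
    rcases lt_trichotomy (f x) (f y) with h | h | h
    · exact Or.inl (Or.inr h)
    · exact Or.inl (Or.inl (hf h))
    · exact Or.inr (Or.inr h)

end Helpers

lemma natKey3_lt {K a1 a2 a3 b1 b2 b3 : ℕ} (h2 : a2 < K) (h2' : b2 < K)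
    (h3 : a3 < K) (h3' : b3 < K) :
    (a1 * K + a2) * K + a3 < (b1 * K + b2) * K + b3 ↔
      a1 < b1 ∨ (a1 = b1 ∧ (a2 < b2 ∨ (a2 = b2 ∧ a3 < b3))) := by
  rw [natKey_lt h3 h3', natKey_lt h2 h2']
  constructor
  · rintro ((h | ⟨rfl, h⟩) | ⟨heq, h⟩)
    · exact Or.inl h
    · exact Or.inr ⟨rfl, Or.inl h⟩
    · obtain ⟨rfl, rfl⟩ := natKey_eq h2 h2' heq
      exact Or.inr ⟨rfl, Or.inr ⟨rfl, h⟩⟩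
  · rintro (h | ⟨rfl, h | ⟨rfl, h⟩⟩)
    · exact Or.inl (Or.inl h)
    · exact Or.inl (Or.inr ⟨rfl, h⟩)
    · exact Or.inr ⟨rfl, h⟩

lemma natKey3_eq {K a1 a2 a3 b1 b2 b3 : ℕ} (h2 : a2 < K) (h2' : b2 < K)
    (h3 : a3 < K) (h3' : b3 < K)
    (h : (a1 * K + a2) * K + a3 = (b1 * K + b2) * K + b3) :
    a1 = b1 ∧ a2 = b2 ∧ a3 = b3 := by
  obtain ⟨h4, h5⟩ := natKey_eq h3 h3' h
  obtain ⟨h6, h7⟩ := natKey_eq h2 h2' h4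
  exact ⟨h6, h7, h5⟩

open Classical in
lemma part2 (α : Type) [Fintype α] [DecidableEq α] [PartialOrder α] (I C : Set α)
    (h : IsSplitPartition (compGraph α) I C) :
    ∃ rs : Fin 3 → α → α → Prop, (∀ i, IsLinearOrder α (rs i)) ∧
      (∀ i (x y : α), x ≤ y → rs i x y) ∧ (∀ x y : α, x ≤ y ↔ ∀ i, rs i x y) := by
  classical
  obtain ⟨hunion, hdisj, hind, hcl⟩ := h
  have hIC : ∀ x : α, x ∈ I ∨ x ∈ C := fun x => by
    have : x ∈ I ∪ C := hunion ▸ Set.mem_univ x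
    exact this
  have hnot : ∀ x : α, x ∈ I → x ∈ C → False := fun x hxI hxC =>
    Set.disjoint_left.1 hdisj hxI hxC
  have chainC : ∀ c ∈ C, ∀ c' ∈ C, c ≤ c' ∨ c' ≤ c := by
    intro c hc c' hc'
    by_cases hcc : c = c'
    · exact Or.inl (hcc ▸ le_refl c)
    · exact (hcl c hc c' hc' hcc).2
  have antiI : ∀ a ∈ I, ∀ b ∈ I, a ≤ b → a = b := by
    intro a ha b hb hab
    by_contra hne
    exact hind a ha b hb ⟨hne, Or.inl hab⟩
  set N : ℕ := (Finset.univ.filter (fun c : α => c ∈ C)).card with hN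
  set d : α → ℕ := fun x => (Finset.univ.filter (fun c : α => c ∈ C ∧ c ≤ x)).card with hd
  set uu : α → ℕ := fun x => (Finset.univ.filter (fun c : α => c ∈ C ∧ x ≤ c)).card with huu
  have mono_d : ∀ x y : α, x ≤ y → d x ≤ d y := by
    intro x y hxy
    apply Finset.card_le_card
    intro c hc
    simp only [Finset.mem_filter] at hc ⊢
    exact ⟨hc.1, hc.2.1, hc.2.2.trans hxy⟩
  have mono_u : ∀ x y : α, x ≤ y → uu y ≤ uu x := by
    intro x y hxy
    apply Finset.card_le_card
    intro c hc
    simp only [Finset.mem_filter] at hc ⊢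
    exact ⟨hc.1, hc.2.1, hxy.trans hc.2.2⟩
  have bound_d : ∀ x, d x ≤ N := by
    intro x
    apply Finset.card_le_card
    intro c hc
    simp only [Finset.mem_filter] at hc ⊢
    exact ⟨hc.1, hc.2.1⟩
  have bound_u : ∀ x, uu x ≤ N := by
    intro x
    apply Finset.card_le_card
    intro c hc
    simp only [Finset.mem_filter] at hc ⊢
    exact ⟨hc.1, hc.2.1⟩
  have B1 : ∀ c ∈ C, ∀ x : α, ¬ c ≤ x → d x < d c := by
    intro c hc x hcx
    have hsub : Finset.univ.filter (fun c' : α => c' ∈ C ∧ c' ≤ x) ⊆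
        (Finset.univ.filter (fun c' : α => c' ∈ C ∧ c' ≤ c)).erase c := by
      intro c' hc'
      simp only [Finset.mem_filter, Finset.mem_erase, Finset.mem_univ, true_and] at hc' ⊢
      obtain ⟨hc'C, hc'x⟩ := hc'
      have hne : c' ≠ c := fun h => hcx (h ▸ hc'x)
      rcases chainC c hc c' hc'C with h1 | h1
      · exact absurd (h1.trans hc'x) hcx
      · exact ⟨hne, hc'C, h1⟩
    have hmem : c ∈ Finset.univ.filter (fun c' : α => c' ∈ C ∧ c' ≤ c) := by
      simp [hc]
    calc d x ≤ _ := Finset.card_le_card hsub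
      _ < _ := Finset.card_erase_lt_of_mem hmem
  have B2 : ∀ c ∈ C, ∀ x : α, ¬ x ≤ c → uu x < uu c := by
    intro c hc x hcx
    have hsub : Finset.univ.filter (fun c' : α => c' ∈ C ∧ x ≤ c') ⊆
        (Finset.univ.filter (fun c' : α => c' ∈ C ∧ c ≤ c')).erase c := by
      intro c' hc'
      simp only [Finset.mem_filter, Finset.mem_erase, Finset.mem_univ, true_and] at hc' ⊢
      obtain ⟨hc'C, hc'x⟩ := hc'
      have hne : c' ≠ c := fun h => hcx (h ▸ hc'x)
      rcases chainC c hc c' hc'C with h1 | h1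
      · exact ⟨hne, hc'C, h1⟩
      · exact absurd (hc'x.trans h1) hcx
    have hmem : c ∈ Finset.univ.filter (fun c' : α => c' ∈ C ∧ c ≤ c') := by
      simp [hc]
    calc uu x ≤ _ := Finset.card_le_card hsub
      _ < _ := Finset.card_erase_lt_of_mem hmem
  have sumC : ∀ c ∈ C, d c + uu c = N + 1 := by
    intro c hc
    have hun : (Finset.univ.filter (fun c' : α => c' ∈ C ∧ c' ≤ c)) ∪
        (Finset.univ.filter (fun c' : α => c' ∈ C ∧ c ≤ c')) =
        Finset.univ.filter (fun c' : α => c' ∈ C) := by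
      ext c'
      simp only [Finset.mem_union, Finset.mem_filter, Finset.mem_univ, true_and]
      constructor
      · rintro (⟨h1, -⟩ | ⟨h1, -⟩) <;> exact h1
      · intro h1
        rcases chainC c hc c' h1 with h2 | h2
        · exact Or.inr ⟨h1, h2⟩
        · exact Or.inl ⟨h1, h2⟩
    have hint : (Finset.univ.filter (fun c' : α => c' ∈ C ∧ c' ≤ c)) ∩
        (Finset.univ.filter (fun c' : α => c' ∈ C ∧ c ≤ c')) = {c} := by
      ext c'
      simp only [Finset.mem_inter, Finset.mem_filter, Finset.mem_univ, true_and,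
        Finset.mem_singleton]
      constructor
      · rintro ⟨⟨-, h1⟩, ⟨-, h2⟩⟩
        exact le_antisymm h1 h2
      · rintro rfl
        exact ⟨⟨hc, le_rfl⟩, ⟨hc, le_rfl⟩⟩
    have hcard := Finset.card_union_add_card_inter
      (Finset.univ.filter (fun c' : α => c' ∈ C ∧ c' ≤ c))
      (Finset.univ.filter (fun c' : α => c' ∈ C ∧ c ≤ c'))
    rw [hun, hint] at hcard
    simp only [Finset.card_singleton] at hcard
    simp only [hd, huu, hN]
    omega
  have pairI : ∀ a ∈ I, ∀ b ∈ I, d a + uu b ≤ N := by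
    intro a ha b hb
    have hdisj2 : Disjoint (Finset.univ.filter (fun c : α => c ∈ C ∧ c ≤ a))
        (Finset.univ.filter (fun c : α => c ∈ C ∧ b ≤ c)) := by
      rw [Finset.disjoint_left]
      intro c hc1 hc2
      simp only [Finset.mem_filter, Finset.mem_univ, true_and] at hc1 hc2
      have hba : b ≤ a := hc2.2.trans hc1.2
      have hbe : b = a := antiI b hb a ha hba
      subst hbe
      have : c = b := le_antisymm hc1.2 hc2.2
      subst this
      exact hnot c hb hc1.1
    have hcard := Finset.card_union_of_disjoint hdisj2
    have hsub : (Finset.univ.filter (fun c : α => c ∈ C ∧ c ≤ a)) ∪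
        (Finset.univ.filter (fun c : α => c ∈ C ∧ b ≤ c)) ⊆
        Finset.univ.filter (fun c : α => c ∈ C) := by
      intro c hc
      simp only [Finset.mem_union, Finset.mem_filter, Finset.mem_univ, true_and] at hc ⊢
      rcases hc with ⟨h1, -⟩ | ⟨h1, -⟩ <;> exact h1
    have := Finset.card_le_card hsub
    simp only [hd, huu, hN]
    omega
  set A : ℕ := Fintype.card α with hA
  set t : α → ℕ := fun x => (Fintype.equivFin α x).val with ht
  have t_inj : Function.Injective t := by
    intro x y hxy
    exact (Fintype.equivFin α).injective (Fin.ext hxy)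
  have t_lt : ∀ x, t x < A := fun x => (Fintype.equivFin α x).isLt
  set K : ℕ := A + N + 2 with hK
  set U : α → ℕ := fun x => N + 1 - uu x with hU
  have UC : ∀ c ∈ C, U c = d c := by
    intro c hc
    have h1 := sumC c hc
    have h2 := bound_u c
    simp only [hU]
    omega
  have UI : ∀ a ∈ I, d a < U a := by
    intro a ha
    have h1 := pairI a ha a ha
    have h2 := bound_u a
    have h3 := bound_d a
    simp only [hU]
    omega
  have bound_U : ∀ x, U x ≤ N + 1 := fun x => by simp only [hU]; omega
  set χ : α → ℕ := fun x => if x ∈ C then 0 else 1 with hχ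
  have χ_lt : ∀ x, χ x < K := by
    intro x
    simp only [hχ]
    split <;> omega
  have χ1_lt : ∀ x : α, 1 - χ x < K := by
    intro x
    simp only [hχ]
    split <;> omega
  have tK_lt : ∀ x, t x < K := fun x => by have := t_lt x; omega
  have tK'_lt : ∀ x : α, K - 1 - t x < K := fun x => by have := t_lt x; omega
  have dK_lt : ∀ x : α, N + 2 - d x < K := by
    intro x
    have : 0 < A := Fintype.card_pos_iff.2 ⟨x⟩
    omega
  set key1 : α → ℕ := fun x => (d x * K + χ x) * K + t x with hkey1
  set key2 : α → ℕ := fun x => (U x * K + (1 - χ x)) * K + (K - 1 - t x) with hkey2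
  set kk : α → ℕ := fun x => ((N + 2 - U x) * K + (N + 2 - d x)) * K + t x with hkk
  have key1_lt : ∀ x y : α, (key1 x < key1 y ↔
      (d x < d y ∨ (d x = d y ∧ (χ x < χ y ∨ (χ x = χ y ∧ t x < t y))))) :=
    fun x y => natKey3_lt (χ_lt x) (χ_lt y) (tK_lt x) (tK_lt y)
  have key2_lt : ∀ x y : α, (key2 x < key2 y ↔
      (U x < U y ∨ (U x = U y ∧ ((1 - χ x) < (1 - χ y) ∨
        ((1 - χ x) = (1 - χ y) ∧ K - 1 - t x < K - 1 - t y))))) :=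
    fun x y => natKey3_lt (χ1_lt x) (χ1_lt y) (tK'_lt x) (tK'_lt y)
  have kk_lt : ∀ x y : α, (kk x < kk y ↔
      ((N + 2 - U x) < (N + 2 - U y) ∨ ((N + 2 - U x) = (N + 2 - U y) ∧
        ((N + 2 - d x) < (N + 2 - d y) ∨
          ((N + 2 - d x) = (N + 2 - d y) ∧ t x < t y))))) :=
    fun x y => natKey3_lt (dK_lt x) (dK_lt y) (tK_lt x) (tK_lt y)
  have key1_inj : Function.Injective key1 := by
    intro x y hxy
    obtain ⟨-, -, h3⟩ := natKey3_eq (χ_lt x) (χ_lt y) (tK_lt x) (tK_lt y) hxy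
    exact t_inj h3
  have key2_inj : Function.Injective key2 := by
    intro x y hxy
    obtain ⟨-, -, h3⟩ := natKey3_eq (χ1_lt x) (χ1_lt y) (tK'_lt x) (tK'_lt y) hxy
    have h4 := t_lt x
    have h5 := t_lt y
    exact t_inj (by omega)
  have kk_inj : Function.Injective kk := by
    intro x y hxy
    obtain ⟨-, -, h3⟩ := natKey3_eq (dK_lt x) (dK_lt y) (tK_lt x) (tK_lt y) hxy
    exact t_inj h3
  have χC : ∀ x ∈ C, χ x = 0 := fun x hx => by simp only [hχ]; rw [if_pos hx]
  have χI : ∀ x ∈ I, χ x = 1 := fun x hx => by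
    simp only [hχ]
    rw [if_neg (fun hc => hnot x hx hc)]
  have key1_mono : ∀ x y : α, x ≤ y → x ≠ y → key1 x < key1 y := by
    intro x y hxy hne
    rw [key1_lt]
    rcases hIC y with hyI | hyC
    · rcases hIC x with hxI | hxC
      · exact absurd (antiI x hxI y hyI hxy) hne
      · have hdd : d x ≤ d y := mono_d _ _ hxy
        rcases eq_or_lt_of_le hdd with he | hl
        · refine Or.inr ⟨he, Or.inl ?_⟩
          rw [χC x hxC, χI y hyI]
          omega
        · exact Or.inl hl
    · have hylex : ¬ y ≤ x := fun h' => hne (le_antisymm hxy h')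
      exact Or.inl (B1 y hyC x hylex)
  have key2_mono : ∀ x y : α, x ≤ y → x ≠ y → key2 x < key2 y := by
    intro x y hxy hne
    rw [key2_lt]
    rcases hIC x with hxI | hxC
    · rcases hIC y with hyI | hyC
      · exact absurd (antiI x hxI y hyI hxy) hne
      · have huy : uu y ≤ uu x := mono_u _ _ hxy
        have hUU : U x ≤ U y := by simp only [hU]; omega
        rcases eq_or_lt_of_le hUU with he | hl
        · refine Or.inr ⟨he, Or.inl ?_⟩
          rw [χC y hyC, χI x hxI]
          omega
        · exact Or.inl hl
    · have hylex : ¬ y ≤ x := fun h' => hne (le_antisymm hxy h')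
      have := B2 x hxC y hylex
      have hb1 := bound_u x
      have hb2 := bound_u y
      refine Or.inl ?_
      simp only [hU]
      omega
  set R : α → α → Prop := fun x y => x ≤ y ∨
    ∃ a b : α, a ∈ I ∧ b ∈ I ∧ kk a < kk b ∧ x ≤ a ∧ b ≤ y with hR
  haveI : IsPartialOrder α R :=
    { refl := fun x => Or.inl le_rfl
      trans := by
        rintro x y z (hxy | ⟨a, b, haI, hbI, hk, hxa, hby⟩)
          (hyz | ⟨a', b', haI', hbI', hk', hya', hbz'⟩)
        · exact Or.inl (hxy.trans hyz)
        · exact Or.inr ⟨a', b', haI', hbI', hk', hxy.trans hya', hbz'⟩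
        · exact Or.inr ⟨a, b, haI, hbI, hk, hxa, hby.trans hyz⟩
        · have hba' : b = a' := antiI b hbI a' haI' (hby.trans hya')
          subst hba'
          exact Or.inr ⟨a, b', haI, hbI', hk.trans hk', hxa, hbz'⟩
      antisymm := by
        rintro x y (hxy | ⟨a, b, haI, hbI, hk, hxa, hby⟩)
          (hyx | ⟨a', b', haI', hbI', hk', hya', hbx'⟩)
        · exact le_antisymm hxy hyx
        · have : b' = a' := antiI b' hbI' a' haI' ((hbx'.trans hxy).trans hya')
          subst this
          omega
        · have : b = a := antiI b hbI a haI ((hby.trans hyx).trans hxa)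
          subst this
          omega
        · have h1 : b = a' := antiI b hbI a' haI' (hby.trans hya')
          have h2 : b' = a := antiI b' hbI' a haI (hbx'.trans hxa)
          subst h1; subst h2
          omega }
  obtain ⟨s, hslin, hRs⟩ := extend_partialOrder R
  refine ⟨![keyOrd key1, keyOrd key2, s], ?_, ?_, ?_⟩
  · intro i
    fin_cases i
    · exact keyOrd_linear key1 key1_inj
    · exact keyOrd_linear key2 key2_inj
    · exact hslin
  · intro i x y hxy
    fin_cases i
    · rcases eq_or_ne x y with rfl | hne
      · exact Or.inl rfl
      · exact Or.inr (key1_mono x y hxy hne)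
    · rcases eq_or_ne x y with rfl | hne
      · exact Or.inl rfl
      · exact Or.inr (key2_mono x y hxy hne)
    · exact hRs _ _ (Or.inl hxy)
  · intro x y
    constructor
    · intro hxy i
      fin_cases i
      · rcases eq_or_ne x y with rfl | hne
        · exact Or.inl rfl
        · exact Or.inr (key1_mono x y hxy hne)
      · rcases eq_or_ne x y with rfl | hne
        · exact Or.inl rfl
        · exact Or.inr (key2_mono x y hxy hne)
      · exact hRs _ _ (Or.inl hxy)
    · intro hall
      have r0 : keyOrd key1 x y := hall 0
      have r1 : keyOrd key2 x y := hall 1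
      have r2 : s x y := hall 2
      by_contra hxy
      have hne : x ≠ y := fun h' => hxy (h' ▸ le_refl x)
      have h0 : key1 x < key1 y := r0.resolve_left hne
      have h1 : key2 x < key2 y := r1.resolve_left hne
      by_cases hyx : y ≤ x
      · have := key1_mono y x hyx hne.symm
        omega
      rcases hIC x with hxI | hxC
      · rcases hIC y with hyI | hyC
        · -- both in I
          rcases lt_trichotomy (kk x) (kk y) with hk | hk | hk
          · rw [key1_lt] at h0
            rw [key2_lt] at h1
            rw [kk_lt] at hk
            rw [χI x hxI, χI y hyI] at h0 h1
            have b1 := bound_d x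
            have b2 := bound_d y
            have b3 := bound_u x
            have b4 := bound_u y
            have b5 := t_lt x
            have b6 := t_lt y
            have e1 : U x = N + 1 - uu x := rfl
            have e2 : U y = N + 1 - uu y := rfl
            omega
          · exact hne (kk_inj hk)
          · have hRyx : R y x := Or.inr ⟨y, x, hyI, hxI, hk, le_rfl, le_rfl⟩
            have hs1 : s y x := hRs _ _ hRyx
            exact hne (hslin.1.antisymm _ _ r2 hs1)
        · -- x ∈ I, y ∈ C, incomparable
          have hu1 := B2 y hyC x hxy
          have b3 := bound_u x
          have b4 := bound_u y
          have hUyx : U y < U x := by simp only [hU]; omega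
          have : key2 y < key2 x := (key2_lt y x).2 (Or.inl hUyx)
          omega
      · rcases hIC y with hyI | hyC
        · -- x ∈ C, y ∈ I, incomparable
          have hd1 := B1 x hxC y hxy
          have : key1 y < key1 x := (key1_lt y x).2 (Or.inl hd1)
          omega
        · rcases chainC x hxC y hyC with h' | h'
          · exact hxy h'
          · exact hyx h'

section ListHelpers
variable {α : Type*}

lemma nodup_two {a b : α} (hab : a ≠ b) :
    ∀ (l : List α), l.Nodup → (∀ x ∈ l, x = a ∨ x = b) → a ∈ l → b ∈ l →
      l = [a, b] ∨ l = [b, a]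
  | [], _, _, ha, _ => by simp at ha
  | [x], _, hm, ha, hb => by
      simp only [List.mem_singleton] at ha hb
      exact absurd (ha.trans hb.symm) hab
  | x :: y :: rest, hnd, hm, ha, hb => by
      have hx := hm x (by simp)
      have hy := hm y (by simp)
      have hxy : x ≠ y := by
        intro h; subst h
        simp [List.nodup_cons] at hnd
      have hrest : rest = [] := by
        cases rest with
        | nil => rfl
        | cons z t =>
          exfalso
          have hz := hm z (by simp)
          have h1 : z ≠ x := by
            intro h; subst h; simp [List.nodup_cons] at hnd
          have h2 : z ≠ y := by
            intro h; subst h; simp [List.nodup_cons] at hnd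
          rcases hx with rfl | rfl <;> rcases hy with rfl | rfl <;>
            rcases hz with rfl | rfl <;> simp_all
      subst hrest
      rcases hx with rfl | rfl <;> rcases hy with rfl | rfl <;> simp_all

lemma filter_flatten (q : α → Bool) :
    ∀ (L : List (List α)), L.flatten.filter q = (L.map (fun l => l.filter q)).flatten := by
  intro L
  induction L with
  | nil => simp
  | cons u t ih => simp [List.filter_append, ih]

lemma chain_blocks {a b : α} (hab : a ≠ b) :
    ∀ (u : List α) (t : List (List α)),
      (u = [a, b] ∨ u = [b, a]) → (∀ x ∈ t, x = [a, b] ∨ x = [b, a]) →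
      (List.Chain' (· ≠ ·) (u ++ t.flatten) ↔ ∀ x ∈ t, x = u) := by
  intro u t
  induction t generalizing u with
  | nil =>
    rintro (rfl | rfl) _ <;> simp [List.Chain', List.isChain_cons_cons, hab, hab.symm]
  | cons v t' ih =>
    intro hu ht
    have hv := ht v (by simp)
    have ihv := ih v hv (fun x hx => ht x (by simp [hx]))
    have hlink : ∀ x y, (u ++ (v :: t').flatten) = x ++ y → True := fun _ _ _ => trivial
    rw [show (u ++ (v :: t').flatten) = u ++ (v ++ t'.flatten) by simp]
    rw [List.Chain', List.isChain_append]
    constructor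
    · rintro ⟨h1, h2, h3⟩
      have huv : u = v := by
        rcases hu with rfl | rfl <;> rcases hv with rfl | rfl
        · rfl
        · exact absurd (h3 b (by simp) b (by simp)) (by simp)
        · exact absurd (h3 a (by simp) a (by simp)) (by simp)
        · rfl
      subst huv
      intro x hx
      rcases List.mem_cons.1 hx with rfl | hx'
      · rfl
      · exact ihv.1 h2 x hx'
    · intro hall
      have huv : v = u := hall v (by simp)
      subst huv
      refine ⟨?_, ihv.2 (fun x hx => hall x (by simp [hx])), ?_⟩
      · rcases hu with rfl | rfl <;> simp [List.Chain', List.isChain_cons_cons, hab, hab.symm]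
      · rcases hu with rfl | rfl
        · intro x hx y hy
          simp [List.cons_append] at hx hy
          subst hx; subst hy; exact hab.symm
        · intro x hx y hy
          simp [List.cons_append] at hx hy
          subst hx; subst hy; exact hab
  end ListHelpers

lemma chain_blocks' {α : Type*} {a b : α} (hab : a ≠ b) (L : List (List α))
    (hL : ∀ x ∈ L, x = [a, b] ∨ x = [b, a]) :
    List.Chain' (· ≠ ·) L.flatten ↔ ((∀ x ∈ L, x = [a, b]) ∨ (∀ x ∈ L, x = [b, a])) := by
  cases L with
  | nil => simp [List.Chain']
  | cons u t =>
    have hu := hL u (by simp)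
    rw [show ((u :: t).flatten) = u ++ t.flatten by simp,
      chain_blocks hab u t hu (fun x hx => hL x (by simp [hx]))]
    constructor
    · intro hall
      have hall' : ∀ x ∈ u :: t, x = u := by
        intro x hx
        rcases List.mem_cons.1 hx with rfl | hx'
        · rfl
        · exact hall x hx'
      rcases hu with rfl | rfl
      · exact Or.inl hall'
      · exact Or.inr hall'
    · rintro (hall | hall) x hx
      · rw [hall x (by simp [hx]), hall u (by simp)]
      · rw [hall x (by simp [hx]), hall u (by simp)]

lemma part1 (α : Type) [Fintype α] [DecidableEq α] [PartialOrder α] (k : ℕ)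
    (rs : Fin k → α → α → Prop)
    (h1 : ∀ i, IsLinearOrder α (rs i)) (h2 : ∀ i (x y : α), x ≤ y → rs i x y)
    (h3 : ∀ x y : α, x ≤ y ↔ ∀ i, rs i x y) :
    ∃ ps : List (List α), ps.length = k ∧ (∀ p ∈ ps, IsPermutationOf p) ∧
      Represents ps.flatten (compGraph α) := by
  classical
  have hp : ∀ i : Fin k, ∃ l : List α, l.Nodup ∧ (∀ v, v ∈ l) ∧ l.Pairwise (rs i) := by
    intro i
    letI := h1 i
    letI : DecidableRel (rs i) := Classical.decRel _
    exact ⟨Finset.univ.sort (rs i), Finset.sort_nodup _ _,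
      fun v => (Finset.mem_sort _).2 (Finset.mem_univ v), Finset.pairwise_sort _ _⟩
  choose p hnd hmem hsorted using hp
  refine ⟨List.ofFn p, by simp, ?_, ?_⟩
  · intro l hl
    rcases List.mem_ofFn.1 hl with ⟨i, rfl⟩
    exact ⟨hnd i, hmem i⟩
  · intro a b hab
    set q : α → Bool := fun x => decide (x = a ∨ x = b) with hq
    have hfil : ∀ i : Fin k, ((p i).filter q = [a, b] ∨ (p i).filter q = [b, a]) := by
      intro i
      refine nodup_two hab _ ((hnd i).filter _) ?_ ?_ ?_
      · intro x hx
        have := (List.mem_filter.1 hx).2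
        simpa [hq] using this
      · exact List.mem_filter.2 ⟨hmem i a, by simp [hq]⟩
      · exact List.mem_filter.2 ⟨hmem i b, by simp [hq]⟩
    have hiff : ∀ i : Fin k, ((p i).filter q = [a, b] ↔ rs i a b) := by
      intro i
      constructor
      · intro h
        have hs := ((hsorted i).filter q)
        rw [h] at hs
        exact (List.pairwise_cons.1 hs).1 b (by simp)
      · intro h
        rcases hfil i with h' | h'
        · exact h'
        · exfalso
          have hs := ((hsorted i).filter q)
          rw [h'] at hs
          have hba : rs i b a := (List.pairwise_cons.1 hs).1 a (by simp)
          exact hab ((h1 i).antisymm _ _ h hba)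
    have hw : (List.ofFn p).flatten.filter q
        = (List.ofFn fun i => (p i).filter q).flatten := by
      rw [filter_flatten, List.map_ofFn]
      rfl
    have halt : Alternates (List.ofFn p).flatten a b ↔
        ((∀ i, rs i a b) ∨ (∀ i, rs i b a)) := by
      unfold Alternates
      rw [show ((List.ofFn p).flatten.filter fun x => x = a ∨ x = b)
            = (List.ofFn fun i => (p i).filter q).flatten from hw]
      rw [chain_blocks' hab _ (by
        intro x hx
        rcases List.mem_ofFn.1 hx with ⟨i, rfl⟩
        exact hfil i)]
      simp only [List.forall_mem_ofFn_iff]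
      constructor
      · rintro (h | h)
        · exact Or.inl fun i => (hiff i).1 (h i)
        · refine Or.inr fun i => ?_
          have hs := ((hsorted i).filter q)
          rw [h i] at hs
          exact (List.pairwise_cons.1 hs).1 a (by simp)
      · rintro (h | h)
        · exact Or.inl fun i => (hiff i).2 (h i)
        · refine Or.inr fun i => ?_
          rcases hfil i with h' | h'
          · exact absurd ((hiff i).1 h') (fun hr => hab ((h1 i).antisymm _ _ hr (h i)))
          · exact h'
    constructor
    · rintro ⟨-, hcomp | hcomp⟩
      · exact halt.2 (Or.inl fun i => h2 i _ _ hcomp)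
      · exact halt.2 (Or.inr fun i => h2 i _ _ hcomp)
    · intro h
      rcases halt.1 h with h' | h'
      · exact ⟨hab, Or.inl ((h3 a b).2 h')⟩
      · exact ⟨hab, Or.inr ((h3 b a).2 h')⟩

theorem stmt16 :
    (∀ (α : Type) [Fintype α] [DecidableEq α] [PartialOrder α] (k : ℕ)
        (rs : Fin k → α → α → Prop),
      (∀ i, IsLinearOrder α (rs i)) → (∀ i (x y : α), x ≤ y → rs i x y) →
      (∀ x y : α, x ≤ y ↔ ∀ i, rs i x y) →
      ∃ ps : List (List α), ps.length = k ∧ (∀ p ∈ ps, IsPermutationOf p) ∧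
        Represents ps.flatten (compGraph α)) ∧
    (∀ (α : Type) [Fintype α] [DecidableEq α] [PartialOrder α] (I C : Set α),
      IsSplitPartition (compGraph α) I C →
      ∃ rs : Fin 3 → α → α → Prop, (∀ i, IsLinearOrder α (rs i)) ∧
        (∀ i (x y : α), x ≤ y → rs i x y) ∧ (∀ x y : α, x ≤ y ↔ ∀ i, rs i x y)) :=
  ⟨fun α _ _ _ k rs h1 h2 h3 => part1 α k rs h1 h2 h3,
   fun α _ _ _ I C h => part2 α I C h⟩
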